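/- Let U ⊆ ℝ_t × ℝ²_x be open, let h be C¹ with h > 0 and v¹, v² be C² on U, and suppose they solve the 2D rotating shallow water system B h = −h div v, B v¹ = v² − ∂₁h, B v² = −v¹ − ∂₂h on U. Then the specific vorticity ζ = ω e^{−ρ}, where ρ = ln h and ω = ∂₁v² − ∂₂v¹, satisfies B ζ = −e^{−ρ} div v on U. -/

import Mathlib

/-- Partial derivative in the `i`-th coordinate direction of spacetime
`ℝ_t × ℝ²_x ≃ (Fin 3 → ℝ)`, coordinates `(x⁰, x¹, x²) = (t, x₁, x₂)`. -/
noncomputable def pd (i : Fin 3) (f : (Fin 3 → ℝ) → ℝ) (x : Fin 3 → ℝ) : ℝ :=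
  fderiv ℝ f x (Pi.single i 1)

/-- Material derivative `B = ∂ₜ + v¹∂₁ + v²∂₂`. -/
noncomputable def matD (v1 v2 f : (Fin 3 → ℝ) → ℝ) (x : Fin 3 → ℝ) : ℝ :=
  pd 0 f x + v1 x * pd 1 f x + v2 x * pd 2 f x

/-!
Differentiating the momentum equations by `∂₁` and `∂₂` and subtracting yields the vorticity
equation `B ω = −(1 + ω) div v`, provided `∂₁∂₂h = ∂₂∂₁h`. The mass equation gives
`B(e^{−ρ}) = −e^{−ρ} B h / h = e^{−ρ} div v`, and the product rule combines the two:
`B ζ = e^{−ρ}(−(1 + ω) div v + ω div v)`.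
-/

open Filter Topology

section PartialDerivatives

variable {i j : Fin 3} {f g : (Fin 3 → ℝ) → ℝ} {x : Fin 3 → ℝ}

lemma pd_congr (hfg : f =ᶠ[𝓝 x] g) : pd i f x = pd i g x := by
  rw [pd, pd, hfg.fderiv_eq]

lemma pd_add (hf : DifferentiableAt ℝ f x) (hg : DifferentiableAt ℝ g x) :
    pd i (fun y => f y + g y) x = pd i f x + pd i g x := by
  simp [pd, fderiv_fun_add hf hg]

lemma pd_sub (hf : DifferentiableAt ℝ f x) (hg : DifferentiableAt ℝ g x) :
    pd i (fun y => f y - g y) x = pd i f x - pd i g x := by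
  simp [pd, fderiv_fun_sub hf hg]

lemma pd_neg : pd i (fun y => -f y) x = -pd i f x := by
  simp [pd, fderiv_fun_neg]

lemma pd_mul (hf : DifferentiableAt ℝ f x) (hg : DifferentiableAt ℝ g x) :
    pd i (fun y => f y * g y) x = f x * pd i g x + g x * pd i f x := by
  simp [pd, fderiv_fun_mul hf hg]

lemma pd_comp {φ : ℝ → ℝ} {φ' : ℝ} (hφ : HasDerivAt φ φ' (f x)) (hf : DifferentiableAt ℝ f x) :
    pd i (fun y => φ (f y)) x = φ' * pd i f x := by
  rw [pd, pd, show (fun y => φ (f y)) = φ ∘ f from rfl,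
    (hφ.comp_hasFDerivAt x hf.hasFDerivAt).fderiv]
  rfl

lemma fderiv_eq_sum_pd (f : (Fin 3 → ℝ) → ℝ) :
    fderiv ℝ f = fun y => ∑ k, pd k f y • ContinuousLinearMap.proj k := by
  funext y
  refine ContinuousLinearMap.ext fun w => ?_
  conv_lhs => rw [pi_eq_sum_univ' w]
  simp [pd, mul_comm]

lemma differentiableAt_fderiv_of_pd (hf : ∀ k, DifferentiableAt ℝ (pd k f) x) :
    DifferentiableAt ℝ (fderiv ℝ f) x := by
  rw [fderiv_eq_sum_pd]
  fun_prop

lemma pd_pd_eq_fderiv_fderiv (hf : DifferentiableAt ℝ (fderiv ℝ f) x) :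
    pd i (pd j f) x = fderiv ℝ (fderiv ℝ f) x (Pi.single i 1) (Pi.single j 1) := by
  change fderiv ℝ (fun y => fderiv ℝ f y (Pi.single j 1)) x (Pi.single i 1) = _
  simp [fderiv_clm_apply hf (differentiableAt_const _)]

end PartialDerivatives

/-- The hypothesis of `second_derivative_symmetric_of_eventually`; weaker than `C²` near `x`,
which `h` is not known to be. -/
def TwiceDifferentiableAt (f : (Fin 3 → ℝ) → ℝ) (x : Fin 3 → ℝ) : Prop :=
  (∀ᶠ y in 𝓝 x, DifferentiableAt ℝ f y) ∧ DifferentiableAt ℝ (fderiv ℝ f) x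

namespace TwiceDifferentiableAt

variable {i j : Fin 3} {f : (Fin 3 → ℝ) → ℝ} {x : Fin 3 → ℝ}

lemma of_pd (hf : ∀ᶠ y in 𝓝 x, DifferentiableAt ℝ f y)
    (hpd : ∀ k, DifferentiableAt ℝ (pd k f) x) : TwiceDifferentiableAt f x :=
  ⟨hf, differentiableAt_fderiv_of_pd hpd⟩

lemma differentiableAt (hf : TwiceDifferentiableAt f x) : DifferentiableAt ℝ f x :=
  hf.1.self_of_nhds

lemma differentiableAt_pd (hf : TwiceDifferentiableAt f x) : DifferentiableAt ℝ (pd i f) x :=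
  hf.2.clm_apply (differentiableAt_const _)

lemma pd_pd_comm (hf : TwiceDifferentiableAt f x) : pd i (pd j f) x = pd j (pd i f) x := by
  rw [pd_pd_eq_fderiv_fderiv hf.2, pd_pd_eq_fderiv_fderiv hf.2]
  exact second_derivative_symmetric_of_eventually (hf.1.mono fun y hy => hy.hasFDerivAt)
    hf.2.hasFDerivAt _ _

end TwiceDifferentiableAt

lemma ContDiffAt.twiceDifferentiableAt {f : (Fin 3 → ℝ) → ℝ} {x : Fin 3 → ℝ}
    (hf : ContDiffAt ℝ 2 f x) : TwiceDifferentiableAt f x :=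
  ⟨(hf.eventually (by simp)).mono fun _ hy => hy.differentiableAt two_ne_zero,
    (hf.fderiv_right (m := 1) le_rfl).differentiableAt one_ne_zero⟩

section MaterialDerivative

variable {i : Fin 3} {v1 v2 f g : (Fin 3 → ℝ) → ℝ} {x : Fin 3 → ℝ}

lemma matD_sub (hf : DifferentiableAt ℝ f x) (hg : DifferentiableAt ℝ g x) :
    matD v1 v2 (fun y => f y - g y) x = matD v1 v2 f x - matD v1 v2 g x := by
  simp only [matD, pd_sub hf hg]
  ring

lemma matD_mul (hf : DifferentiableAt ℝ f x) (hg : DifferentiableAt ℝ g x) :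
    matD v1 v2 (fun y => f y * g y) x = f x * matD v1 v2 g x + g x * matD v1 v2 f x := by
  simp only [matD, pd_mul hf hg]
  ring

lemma matD_comp {φ : ℝ → ℝ} {φ' : ℝ} (hφ : HasDerivAt φ φ' (f x))
    (hf : DifferentiableAt ℝ f x) : matD v1 v2 (fun y => φ (f y)) x = φ' * matD v1 v2 f x := by
  simp only [matD, pd_comp hφ hf]
  ring

lemma matD_exp_neg_log (hf : DifferentiableAt ℝ f x) (hpos : 0 < f x) :
    matD v1 v2 (fun y => Real.exp (-Real.log (f y))) x
      = -Real.exp (-Real.log (f x)) * matD v1 v2 f x / f x := by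
  have hφ : HasDerivAt (fun t => Real.exp (-Real.log t))
      (Real.exp (-Real.log (f x)) * -(f x)⁻¹) (f x) :=
    (Real.hasDerivAt_log hpos.ne').neg.exp
  rw [matD_comp hφ hf]
  ring

lemma differentiableAt_matD (hv1 : DifferentiableAt ℝ v1 x) (hv2 : DifferentiableAt ℝ v2 x)
    (hf : TwiceDifferentiableAt f x) : DifferentiableAt ℝ (matD v1 v2 f) x := by
  have := hf.differentiableAt_pd (i := 0)
  have := hf.differentiableAt_pd (i := 1)
  have := hf.differentiableAt_pd (i := 2)
  unfold matD
  fun_prop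

lemma pd_matD (hv1 : DifferentiableAt ℝ v1 x) (hv2 : DifferentiableAt ℝ v2 x)
    (hf : TwiceDifferentiableAt f x) :
    pd i (matD v1 v2 f) x
      = matD v1 v2 (pd i f) x + pd i v1 x * pd 1 f x + pd i v2 x * pd 2 f x := by
  have hf0 := hf.differentiableAt_pd (i := 0)
  have hf1 := hf.differentiableAt_pd (i := 1)
  have hf2 := hf.differentiableAt_pd (i := 2)
  change pd i (fun y => pd 0 f y + v1 y * pd 1 f y + v2 y * pd 2 f y) x = _
  rw [pd_add (hf0.fun_add (hv1.fun_mul hf1)) (hv2.fun_mul hf2), pd_add hf0 (hv1.fun_mul hf1),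
    pd_mul hv1 hf1, pd_mul hv2 hf2, hf.pd_pd_comm (i := i) (j := 0),
    hf.pd_pd_comm (i := i) (j := 1), hf.pd_pd_comm (i := i) (j := 2)]
  unfold matD
  ring

end MaterialDerivative

section ShallowWater

variable {h v1 v2 : (Fin 3 → ℝ) → ℝ} {x : Fin 3 → ℝ}

/-- The momentum equations give `∂₁h, ∂₂h` in terms of first derivatives of `v` and the mass
equation then gives `∂ₜh`, so `h` is twice differentiable although it is only assumed `C¹`. -/
lemma twiceDifferentiableAt_height (hh : ∀ᶠ y in 𝓝 x, DifferentiableAt ℝ h y)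
    (hv1 : ContDiffAt ℝ 2 v1 x) (hv2 : ContDiffAt ℝ 2 v2 x)
    (hmass : ∀ᶠ y in 𝓝 x, matD v1 v2 h y = -(h y) * (pd 1 v1 y + pd 2 v2 y))
    (hmom1 : ∀ᶠ y in 𝓝 x, matD v1 v2 v1 y = v2 y - pd 1 h y)
    (hmom2 : ∀ᶠ y in 𝓝 x, matD v1 v2 v2 y = -v1 y - pd 2 h y) :
    TwiceDifferentiableAt h x := by
  have tv1 := hv1.twiceDifferentiableAt
  have tv2 := hv2.twiceDifferentiableAt
  have dv1 := tv1.differentiableAt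
  have dv2 := tv2.differentiableAt
  have dBv1 := differentiableAt_matD dv1 dv2 tv1
  have dBv2 := differentiableAt_matD dv1 dv2 tv2
  have d11 := tv1.differentiableAt_pd (i := 1)
  have d22 := tv2.differentiableAt_pd (i := 2)
  have dh := hh.self_of_nhds
  have dh1 : DifferentiableAt ℝ (pd 1 h) x := by
    refine DifferentiableAt.congr_of_eventuallyEq (f := fun y => v2 y - matD v1 v2 v1 y)
      (by fun_prop) ?_
    filter_upwards [hmom1] with y hy
    linarith
  have dh2 : DifferentiableAt ℝ (pd 2 h) x := by
    refine DifferentiableAt.congr_of_eventuallyEq (f := fun y => -v1 y - matD v1 v2 v2 y)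
      (by fun_prop) ?_
    filter_upwards [hmom2] with y hy
    linarith
  have dh0 : DifferentiableAt ℝ (pd 0 h) x := by
    refine DifferentiableAt.congr_of_eventuallyEq
      (f := fun y => -(h y) * (pd 1 v1 y + pd 2 v2 y) - v1 y * pd 1 h y - v2 y * pd 2 h y)
      (by fun_prop) ?_
    filter_upwards [hmass] with y hy
    rw [matD] at hy
    linarith
  exact .of_pd hh fun k => by fin_cases k <;> assumption

lemma vorticity_transport (hh : ∀ᶠ y in 𝓝 x, DifferentiableAt ℝ h y)
    (hv1 : ContDiffAt ℝ 2 v1 x) (hv2 : ContDiffAt ℝ 2 v2 x)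
    (hmass : ∀ᶠ y in 𝓝 x, matD v1 v2 h y = -(h y) * (pd 1 v1 y + pd 2 v2 y))
    (hmom1 : ∀ᶠ y in 𝓝 x, matD v1 v2 v1 y = v2 y - pd 1 h y)
    (hmom2 : ∀ᶠ y in 𝓝 x, matD v1 v2 v2 y = -v1 y - pd 2 h y) :
    matD v1 v2 (fun y => pd 1 v2 y - pd 2 v1 y) x
      = -(1 + (pd 1 v2 x - pd 2 v1 x)) * (pd 1 v1 x + pd 2 v2 x) := by
  have th := twiceDifferentiableAt_height hh hv1 hv2 hmass hmom1 hmom2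
  have tv1 := hv1.twiceDifferentiableAt
  have tv2 := hv2.twiceDifferentiableAt
  have dv1 := tv1.differentiableAt
  have dv2 := tv2.differentiableAt
  have pd1_mom2 : pd 1 (matD v1 v2 v2) x = -pd 1 v1 x - pd 1 (pd 2 h) x := by
    rw [pd_congr hmom2, pd_sub dv1.fun_neg th.differentiableAt_pd, pd_neg]
  have pd2_mom1 : pd 2 (matD v1 v2 v1) x = pd 2 v2 x - pd 2 (pd 1 h) x := by
    rw [pd_congr hmom1, pd_sub dv2 th.differentiableAt_pd]
  rw [pd_matD dv1 dv2 tv2] at pd1_mom2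
  rw [pd_matD dv1 dv2 tv1] at pd2_mom1
  rw [matD_sub tv2.differentiableAt_pd tv1.differentiableAt_pd]
  linear_combination pd1_mom2 - pd2_mom1 - th.pd_pd_comm (i := 1) (j := 2)

end ShallowWater

/-- For a `C¹` positive height `h` and `C²` velocity `(v¹, v²)` solving the 2D rotating
shallow water system `B h = −h div v`, `B v¹ = v² − ∂₁h`, `B v² = −v¹ − ∂₂h` on an open
set `U`, the specific vorticity `ζ = ω e^{−ρ}` (with `ρ = ln h`, `ω = ∂₁v² − ∂₂v¹`)
satisfies `B ζ = −e^{−ρ} div v` on `U`. -/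
theorem specific_vorticity_transport
    (U : Set (Fin 3 → ℝ)) (hU : IsOpen U)
    (h v1 v2 : (Fin 3 → ℝ) → ℝ)
    (hh : ContDiffOn ℝ 1 h U)
    (hv1 : ContDiffOn ℝ 2 v1 U) (hv2 : ContDiffOn ℝ 2 v2 U)
    (hpos : ∀ x ∈ U, 0 < h x)
    (hmass : ∀ x ∈ U, matD v1 v2 h x = -(h x) * (pd 1 v1 x + pd 2 v2 x))
    (hmom1 : ∀ x ∈ U, matD v1 v2 v1 x = v2 x - pd 1 h x)
    (hmom2 : ∀ x ∈ U, matD v1 v2 v2 x = -v1 x - pd 2 h x) :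
    ∀ x ∈ U,
      matD v1 v2
        (fun y => (pd 1 v2 y - pd 2 v1 y) * Real.exp (-(Real.log (h y)))) x
        = -(Real.exp (-(Real.log (h x)))) * (pd 1 v1 x + pd 2 v2 x) := by
  intro x hx
  have hUx : U ∈ 𝓝 x := hU.mem_nhds hx
  have dh : ∀ᶠ y in 𝓝 x, DifferentiableAt ℝ h y := eventually_of_mem hUx fun y hy =>
    (hh.differentiableOn one_ne_zero).differentiableAt (hU.mem_nhds hy)
  have tv1 := (hv1.contDiffAt hUx).twiceDifferentiableAt
  have tv2 := (hv2.contDiffAt hUx).twiceDifferentiableAt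
  have hω := vorticity_transport dh (hv1.contDiffAt hUx) (hv2.contDiffAt hUx)
    (eventually_of_mem hUx hmass) (eventually_of_mem hUx hmom1) (eventually_of_mem hUx hmom2)
  have hρ := matD_exp_neg_log (v1 := v1) (v2 := v2) dh.self_of_nhds (hpos x hx)
  have dE : DifferentiableAt ℝ (fun y => Real.exp (-Real.log (h y))) x :=
    (dh.self_of_nhds.log (hpos x hx).ne').neg.exp
  rw [matD_mul (tv2.differentiableAt_pd.fun_sub tv1.differentiableAt_pd) dE, hω, hρ,
    hmass x hx]
  field_simp [(hpos x hx).ne']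
  ring
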